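/- arXiv:2501.05123 — 2 statements merged into one kernel-verified Lean document; each statement's English description precedes it below -/
import Mathlib

section
/- Let n ≥ 3 and let D be a nonempty set of integers, each of which occurs as a finite directed distance between some pair of vertices of an oriented cycle C⃗_n, with min(D) = 1. If C⃗_n is D-antimagic, then C⃗_n is unidirectional or Θ-oriented. -/
open scoped Classical

/-- There is a directed walk of length `k` from `u` to `v` in the digraph with arc relation `A`. -/
def WalkLen {V : Type*} (A : V → V → Prop) : ℕ → V → V → Prop
  | 0, u, v => u = v
  | k + 1, u, v => ∃ w, A u w ∧ WalkLen A k w v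

/-- The directed distance from `u` to `v` is exactly `k`
(i.e. `k` is the length of a shortest directed path from `u` to `v`). -/
def HasDist {V : Type*} (A : V → V → Prop) (u v : V) (k : ℕ) : Prop :=
  WalkLen A k u v ∧ ∀ m < k, ¬ WalkLen A m u v

/-- `y` belongs to the `D`-neighborhood of `v`: the distance from `v` to `y` lies in `D`. -/
def InDNbhd {V : Type*} (A : V → V → Prop) (D : Set ℕ) (v y : V) : Prop :=
  ∃ k ∈ D, HasDist A v y k

/-- The `D`-weight of `v` under the labeling `f`: the sum of labels of the `D`-neighbors. -/
noncomputable def dWeight {V : Type*} [Fintype V] (A : V → V → Prop) (D : Set ℕ)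
    (f : V → ℕ) (v : V) : ℕ :=
  ∑ y : V, if InDNbhd A D v y then f y else 0

/-- The digraph `(V, A)` is `D`-antimagic: some bijective labeling of the vertices by
`1, …, |V|` gives pairwise distinct `D`-weights. -/
def DAntimagic (V : Type*) [Fintype V] (A : V → V → Prop) (D : Set ℕ) : Prop :=
  ∃ f : V ≃ Fin (Fintype.card V),
    Function.Injective fun v => dWeight A D (fun y => (f y : ℕ) + 1) v

/-- The orientation of the cycle `C_n` determined by `σ`: the edge between vertex `i` and
vertex `(i+1) mod n` is directed `i → i+1` when `σ i = true`, and `i+1 → i` otherwise. -/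
def cycleArc (n : ℕ) (σ : Fin n → Bool) (u v : Fin n) : Prop :=
  (σ u = true ∧ (v : ℕ) = ((u : ℕ) + 1) % n) ∨
  (σ v = false ∧ (u : ℕ) = ((v : ℕ) + 1) % n)

/-- The arc relation of the unidirectional oriented cycle `C⃗_n`: arcs `i → (i+1) mod n`. -/
def uniArc (n : ℕ) (u v : Fin n) : Prop :=
  (v : ℕ) = ((u : ℕ) + 1) % n

/-- An orientation of `C_n` is unidirectional if all edges are directed the same way around. -/
def Unidirectional (n : ℕ) (σ : Fin n → Bool) : Prop :=
  (∀ i, σ i = true) ∨ (∀ i, σ i = false)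

/-- A sink: a vertex of out-degree 0. -/
def IsSink {V : Type*} (A : V → V → Prop) (u : V) : Prop :=
  ∀ v, ¬ A u v

/-- A source: a vertex of in-degree 0. -/
def IsSource {V : Type*} (A : V → V → Prop) (u : V) : Prop :=
  ∀ v, ¬ A v u

/-- A digraph is Θ-oriented if it has exactly one sink and exactly one source, and
they are adjacent (so the arc between them goes from the source to the sink). -/
def ThetaOriented {V : Type*} (A : V → V → Prop) : Prop :=
  ∃ s t, IsSink A s ∧ IsSource A t ∧ (∀ u, IsSink A u → u = s) ∧
    (∀ u, IsSource A u → u = t) ∧ A t s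

/-- The arc relation of the Θ-oriented cycle on `Fin n`:
arcs `i → i+1` for `0 ≤ i ≤ n-2`, together with the arc `0 → n-1`. -/
def thetaArc (n : ℕ) (u v : Fin n) : Prop :=
  ((v : ℕ) = (u : ℕ) + 1) ∨ ((u : ℕ) = 0 ∧ (v : ℕ) = n - 1)

/-- The arc relation of a disjoint union of `c` oriented cycles, the `j`-th component having
`len j` vertices and arc relation `A j`. -/
def unionArc (c : ℕ) (len : Fin c → ℕ)
    (A : ∀ j, Fin (len j) → Fin (len j) → Prop)
    (u v : Σ j, Fin (len j)) : Prop :=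
  ∃ h : u.1 = v.1, A v.1 (Fin.cast (congrArg len h) u.2) v.2

open Fin.CommRing

section helpers
variable {n : ℕ} [NeZero n]

lemma my_val_add_one (hn : 3 ≤ n) (u : Fin n) : ((u + 1 : Fin n) : ℕ) = ((u : ℕ) + 1) % n := by
  rw [Fin.val_add, Fin.val_one']
  rw [Nat.mod_eq_of_lt (show 1 < n by omega)]

lemma arc_iff (hn : 3 ≤ n) (σ : Fin n → Bool) (u v : Fin n) :
    cycleArc n σ u v ↔ (σ u = true ∧ v = u + 1) ∨ (σ v = false ∧ u = v + 1) := by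
  have h1 := my_val_add_one hn u
  have h2 := my_val_add_one hn v
  unfold cycleArc
  rw [show ((v:ℕ) = ((u:ℕ)+1) % n) ↔ v = u + 1 from by rw [← h1, Fin.val_eq_val],
      show ((u:ℕ) = ((v:ℕ)+1) % n) ↔ u = v + 1 from by rw [← h2, Fin.val_eq_val]]

lemma sink_iff (hn : 3 ≤ n) (σ : Fin n → Bool) (u : Fin n) :
    IsSink (cycleArc n σ) u ↔ (σ u = false ∧ σ (u - 1) = true) := by
  constructor
  · intro h
    constructor
    · by_contra hu
      exact h (u + 1) ((arc_iff hn σ u (u+1)).mpr (Or.inl ⟨by simpa using hu, rfl⟩))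
    · by_contra hu
      exact h (u - 1) ((arc_iff hn σ u (u-1)).mpr (Or.inr ⟨by simpa using hu, (sub_add_cancel u 1).symm⟩))
  · rintro ⟨h1, h2⟩ v hv
    rcases (arc_iff hn σ u v).mp hv with ⟨ht, _⟩ | ⟨hf, he⟩
    · rw [h1] at ht; exact Bool.false_ne_true ht
    · have : v = u - 1 := by rw [he]; ring
      rw [this, h2] at hf; simp [h2] at hf

lemma source_iff (hn : 3 ≤ n) (σ : Fin n → Bool) (u : Fin n) :
    IsSource (cycleArc n σ) u ↔ (σ u = true ∧ σ (u - 1) = false) := by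
  constructor
  · intro h
    constructor
    · by_contra hu
      exact h (u + 1) ((arc_iff hn σ (u+1) u).mpr (Or.inr ⟨by simpa using hu, rfl⟩))
    · by_contra hu
      exact h (u - 1) ((arc_iff hn σ (u-1) u).mpr (Or.inl ⟨by simpa using hu, (sub_add_cancel u 1).symm⟩))
  · rintro ⟨h1, h2⟩ v hv
    rcases (arc_iff hn σ v u).mp hv with ⟨ht, he⟩ | ⟨hf, _⟩
    · have : v = u - 1 := by rw [he]; ring
      rw [this, h2] at ht; exact Bool.false_ne_true ht
    · rw [h1] at hf; exact Bool.false_ne_true hf.symm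

end helpers

section more
variable {n : ℕ} [NeZero n]

lemma sink_between (hn : 3 ≤ n) (σ : Fin n → Bool) :
    ∀ k : ℕ, ∀ i : Fin n, σ i = true → σ (i + ((k + 1 : ℕ) : Fin n)) = false →
      ∃ m : ℕ, m ≤ k ∧ IsSink (cycleArc n σ) (i + ((m + 1 : ℕ) : Fin n)) := by
  intro k
  induction k with
  | zero =>
    intro i hi hf
    refine ⟨0, le_refl 0, (sink_iff hn σ _).mpr ⟨by simpa using hf, ?_⟩⟩
    have : i + ((0 + 1 : ℕ) : Fin n) - 1 = i := by push_cast; ring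
    rw [this]; exact hi
  | succ k ih =>
    intro i hi hf
    by_cases h1 : σ (i + ((1 : ℕ) : Fin n)) = true
    · have hf' : σ ((i + ((1:ℕ) : Fin n)) + ((k + 1 : ℕ) : Fin n)) = false := by
        have : (i + ((1:ℕ) : Fin n)) + ((k + 1 : ℕ) : Fin n) = i + ((k + 1 + 1 : ℕ) : Fin n) := by
          push_cast; ring
        rw [this]; exact hf
      obtain ⟨m, hm, hs⟩ := ih (i + ((1:ℕ) : Fin n)) h1 hf'
      refine ⟨m + 1, by omega, ?_⟩
      have : (i + ((1:ℕ) : Fin n)) + ((m + 1 : ℕ) : Fin n) = i + ((m + 1 + 1 : ℕ) : Fin n) := by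
        push_cast; ring
      rwa [this] at hs
    · refine ⟨0, by omega, (sink_iff hn σ _).mpr ⟨by simpa using h1, ?_⟩⟩
      have : i + ((0 + 1 : ℕ) : Fin n) - 1 = i := by push_cast; ring
      rw [this]; exact hi

end more

section weights
variable {V : Type*} [Fintype V]

lemma walk_head {A : V → V → Prop} {k : ℕ} {u v : V} (hk : k ≠ 0) (h : WalkLen A k u v) :
    ∃ w, A u w := by
  cases k with
  | zero => omega
  | succ k => obtain ⟨w, hw, _⟩ := h; exact ⟨w, hw⟩

lemma sink_dWeight (A : V → V → Prop) (D : Set ℕ) (hD1 : ∀ d ∈ D, 1 ≤ d) (f : V → ℕ)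
    {s : V} (hs : IsSink A s) : dWeight A D f s = 0 := by
  unfold dWeight
  apply Finset.sum_eq_zero
  intro y _
  rw [if_neg]
  rintro ⟨k, hk, hw, -⟩
  obtain ⟨w, hw'⟩ := walk_head (by have := hD1 k hk; omega) hw
  exact hs w hw'

lemma nbhd_uniq_pred (A : V → V → Prop) (D : Set ℕ) (hD1 : ∀ d ∈ D, 1 ≤ d) (h1D : 1 ∈ D)
    {p s : V} (hps : p ≠ s) (hs : IsSink A s) (harc : A p s) (huniq : ∀ w, A p w → w = s) :
    ∀ y, InDNbhd A D p y ↔ y = s := by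
  intro y
  constructor
  · rintro ⟨k, hk, hw, -⟩
    have hk1 : 1 ≤ k := hD1 k hk
    obtain ⟨k', rfl⟩ : ∃ k', k = k' + 1 := ⟨k - 1, by omega⟩
    obtain ⟨w, hw1, hw2⟩ := hw
    rw [huniq w hw1] at hw2
    cases k' with
    | zero => exact hw2.symm
    | succ m => obtain ⟨z, hz, -⟩ := hw2; exact absurd hz (hs z)
  · rintro rfl
    refine ⟨1, h1D, ⟨_, harc, rfl⟩, ?_⟩
    intro m hm
    have hm0 : m = 0 := by omega
    subst hm0
    exact hps

lemma dWeight_eq_label (A : V → V → Prop) (D : Set ℕ) (f : V → ℕ) {p s : V}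
    (h : ∀ y, InDNbhd A D p y ↔ y = s) : dWeight A D f p = f s := by
  unfold dWeight
  rw [Finset.sum_congr rfl (fun y _ => if_congr (h y) rfl rfl)]
  simp

end weights

section uniq
variable {n : ℕ} [NeZero n]

lemma source_uniq (hn : 3 ≤ n) (σ : Fin n → Bool)
    (hsk : ∀ s s' : Fin n, IsSink (cycleArc n σ) s → IsSink (cycleArc n σ) s' → s = s')
    {t t' : Fin n} (ht : IsSource (cycleArc n σ) t) (ht' : IsSource (cycleArc n σ) t') :
    t = t' := by
  by_contra hne
  obtain ⟨ht1, ht2⟩ := (source_iff hn σ t).mp ht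
  obtain ⟨ht1', ht2'⟩ := (source_iff hn σ t').mp ht'
  set k : ℕ := ((t' - 1 - t : Fin n)).val with hkdef
  set k' : ℕ := ((t - 1 - t' : Fin n)).val with hkdef'
  have hcast : ∀ a : ℕ, (((a : ℕ) : Fin n) : ℕ) = a % n := fun a => Fin.val_natCast a n
  have hcastk : ((k : ℕ) : Fin n) = t' - 1 - t := by rw [hkdef, Fin.cast_val_eq_self]
  have hcastk' : ((k' : ℕ) : Fin n) = t - 1 - t' := by rw [hkdef', Fin.cast_val_eq_self]
  have hkpos : 1 ≤ k := by
    by_contra h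
    have h0 : (t' - 1 - t : Fin n) = 0 := by
      apply Fin.ext; rw [Fin.val_zero]; omega
    have : t' - 1 = t := sub_eq_zero.mp h0
    rw [← this, ht2'] at ht1
    simp at ht1
  have hkpos' : 1 ≤ k' := by
    by_contra h
    have h0 : (t - 1 - t' : Fin n) = 0 := by
      apply Fin.ext; rw [Fin.val_zero]; omega
    have : t - 1 = t' := sub_eq_zero.mp h0
    rw [← this, ht2] at ht1'
    simp at ht1'
  have hnself : ((n : ℕ) : Fin n) = 0 := Fin.natCast_self n
  have hklt : k ≤ n - 2 := by
    by_contra h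
    have hk1 : k = n - 1 := by have := (t' - 1 - t : Fin n).is_lt; omega
    apply hne
    have : t' - t = ((k : ℕ) : Fin n) + 1 := by rw [hcastk]; ring
    rw [hk1] at this
    have h2 : (((n - 1 : ℕ) : Fin n) : Fin n) + 1 = 0 := by
      have : ((n - 1 : ℕ) : Fin n) + ((1 : ℕ) : Fin n) = ((n - 1 + 1 : ℕ) : Fin n) := by
        push_cast; ring
      simp only [Nat.cast_one] at this
      rw [this, show n - 1 + 1 = n by omega, hnself]
    rw [h2] at this
    have : t' - t = 0 := this
    exact (sub_eq_zero.mp this).symm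
  have hklt' : k' ≤ n - 2 := by
    by_contra h
    have hk1 : k' = n - 1 := by have := (t - 1 - t' : Fin n).is_lt; omega
    apply hne
    have : t - t' = ((k' : ℕ) : Fin n) + 1 := by rw [hcastk']; ring
    rw [hk1] at this
    have h2 : (((n - 1 : ℕ) : Fin n) : Fin n) + 1 = 0 := by
      have : ((n - 1 : ℕ) : Fin n) + ((1 : ℕ) : Fin n) = ((n - 1 + 1 : ℕ) : Fin n) := by
        push_cast; ring
      simp only [Nat.cast_one] at this
      rw [this, show n - 1 + 1 = n by omega, hnself]
    rw [h2] at this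
    have : t - t' = 0 := this
    exact sub_eq_zero.mp this
  -- sum of k and k'
  have hsumcast : ((k + k' : ℕ) : Fin n) = ((n - 2 : ℕ) : Fin n) := by
    have e1 : ((k + k' : ℕ) : Fin n) = ((k : ℕ) : Fin n) + ((k' : ℕ) : Fin n) := by push_cast; ring
    have e2 : ((n - 2 : ℕ) : Fin n) + ((2 : ℕ) : Fin n) = 0 := by
      have : ((n - 2 : ℕ) : Fin n) + ((2 : ℕ) : Fin n) = ((n - 2 + 2 : ℕ) : Fin n) := by
        push_cast; ring
      rw [this, show n - 2 + 2 = n by omega, hnself]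
    have e3 : ((k : ℕ) : Fin n) + ((k' : ℕ) : Fin n) + ((2 : ℕ) : Fin n) = 0 := by
      rw [hcastk, hcastk']
      push_cast
      ring
    rw [e1]
    exact add_right_cancel (e3.trans e2.symm)
  have hsum : k + k' = n - 2 := by
    have hv : (k + k') % n = (n - 2) % n := by
      have := congrArg Fin.val hsumcast
      rwa [hcast, hcast] at this
    rw [Nat.mod_eq_of_lt (show n - 2 < n by omega)] at hv
    rcases lt_or_ge (k + k') n with h | h
    · rwa [Nat.mod_eq_of_lt h] at hv
    · rw [Nat.mod_eq_sub_mod h, Nat.mod_eq_of_lt (by omega)] at hv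
      omega
  -- two sinks
  obtain ⟨m1, hm1, hs1⟩ := sink_between hn σ (k - 1) t ht1 (by
    rw [show k - 1 + 1 = k by omega, hcastk, show t + (t' - 1 - t) = t' - 1 by ring]
    exact ht2')
  obtain ⟨m2, hm2, hs2⟩ := sink_between hn σ (k' - 1) t' ht1' (by
    rw [show k' - 1 + 1 = k' by omega, hcastk', show t' + (t - 1 - t') = t - 1 by ring]
    exact ht2)
  have ht'eq : t' = t + ((k + 1 : ℕ) : Fin n) := by
    have : ((k + 1 : ℕ) : Fin n) = ((k : ℕ) : Fin n) + 1 := by push_cast; ring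
    rw [this, hcastk]; ring
  have hs2' : IsSink (cycleArc n σ) (t + ((k + m2 + 2 : ℕ) : Fin n)) := by
    have : t' + ((m2 + 1 : ℕ) : Fin n) = t + ((k + m2 + 2 : ℕ) : Fin n) := by
      rw [ht'eq]; push_cast; ring
    rwa [this] at hs2
  have heq := hsk _ _ hs1 hs2'
  have hcancel : ((m1 + 1 : ℕ) : Fin n) = ((k + m2 + 2 : ℕ) : Fin n) := by
    exact add_left_cancel heq
  have hvals := congrArg Fin.val hcancel
  rw [hcast, hcast, Nat.mod_eq_of_lt (by omega), Nat.mod_eq_of_lt (by omega)] at hvals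
  omega

end uniq

/-- If `D` is a distance set of an oriented cycle `C⃗_n` with `min D = 1`
and `C⃗_n` is `D`-antimagic, then `C⃗_n` is unidirectional or Θ-oriented. -/
theorem antimagic_minOne_uni_or_theta (n : ℕ) (hn : 3 ≤ n) (σ : Fin n → Bool)
    (D : Set ℕ) (hD : D.Nonempty)
    (hocc : ∀ d ∈ D, ∃ u v : Fin n, HasDist (cycleArc n σ) u v d)
    (hmin : sInf D = 1)
    (hanti : DAntimagic (Fin n) (cycleArc n σ) D) :
    Unidirectional n σ ∨ ThetaOriented (cycleArc n σ) := by
  haveI : NeZero n := ⟨by omega⟩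
  by_cases huni : Unidirectional n σ
  · exact Or.inl huni
  right
  have h1D : 1 ∈ D := by rw [← hmin]; exact Nat.sInf_mem hD
  have hDge : ∀ d ∈ D, 1 ≤ d := fun d hd => by rw [← hmin]; exact Nat.sInf_le hd
  obtain ⟨f, hf⟩ := hanti
  set A := cycleArc n σ with hA
  set lab : Fin n → ℕ := fun y => (f y : ℕ) + 1 with hlab
  -- at most one sink
  have hsk : ∀ s s' : Fin n, IsSink A s → IsSink A s' → s = s' := by
    intro s s' hs hs'
    apply hf
    show dWeight A D lab s = dWeight A D lab s'
    rw [sink_dWeight A D hDge lab hs, sink_dWeight A D hDge lab hs']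
  -- non-unidirectional gives a true and a false value
  rw [Unidirectional, not_or] at huni
  obtain ⟨hnt, hnf⟩ := huni
  push_neg at hnt hnf
  obtain ⟨i, hi⟩ := hnt
  obtain ⟨j, hj⟩ := hnf
  have hi : σ i = false := by simpa using hi
  have hj : σ j = true := by simpa using hj
  -- a sink exists
  have ⟨s, hs⟩ : ∃ s, IsSink A s := by
    set k : ℕ := ((i - j : Fin n)).val with hkdef
    have hkpos : 1 ≤ k := by
      by_contra h
      have h0 : (i - j : Fin n) = 0 := by apply Fin.ext; rw [Fin.val_zero]; omega
      have : i = j := sub_eq_zero.mp h0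
      rw [this, hj] at hi
      simp at hi
    obtain ⟨m, _, hsink⟩ := sink_between hn σ (k - 1) j hj (by
      rw [show k - 1 + 1 = k by omega, hkdef, Fin.cast_val_eq_self,
        show j + (i - j) = i by ring]
      exact hi)
    exact ⟨_, hsink⟩
  obtain ⟨hs1, hs2⟩ := (sink_iff hn σ s).mp hs
  -- neighbors of the sink
  set p : Fin n := s - 1 with hpdef
  set q : Fin n := s + 1 with hqdef
  have hσp : σ p = true := hs2
  have harcps : A p s := (arc_iff hn σ p s).mpr (Or.inl ⟨hσp, (sub_add_cancel s 1).symm⟩)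
  have harcqs : A q s := (arc_iff hn σ q s).mpr (Or.inr ⟨hs1, rfl⟩)
  have hone : ((1 : Fin n) : ℕ) = 1 := by
    rw [Fin.val_one']; exact Nat.mod_eq_of_lt (by omega)
  have hps : p ≠ s := by
    intro h
    have h1 : (1 : Fin n) = 0 := by
      have := sub_eq_iff_eq_add.mp h
      have := add_left_cancel (show s + 0 = s + 1 by rw [add_zero]; exact this)
      exact this.symm
    have := congrArg Fin.val h1
    rw [hone, Fin.val_zero] at this
    omega
  have hqs : q ≠ s := by
    intro h
    have h1 : (1 : Fin n) = 0 := by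
      have := add_left_cancel (show s + 1 = s + 0 by rw [add_zero]; exact h)
      exact this
    have := congrArg Fin.val h1
    rw [hone, Fin.val_zero] at this
    omega
  have hpq : p ≠ q := by
    intro h
    have h2 : ((2 : ℕ) : Fin n) = 0 := by
      push_cast
      linear_combination -h
    have := congrArg Fin.val h2
    rw [Fin.val_natCast, Fin.val_zero, Nat.mod_eq_of_lt (by omega)] at this
    omega
  have hq1 : q - 1 = s := add_sub_cancel_right s 1
  by_cases hq : σ q = true
  · -- q is a source
    have hsrc : IsSource A q := (source_iff hn σ q).mpr ⟨hq, by rw [hq1]; exact hs1⟩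
    exact ⟨s, q, hs, hsrc, fun u hu => hsk u s hu hs,
      fun u hu => source_uniq hn σ hsk hu hsrc, harcqs⟩
  · by_cases hp : σ (p - 1) = false
    · -- p is a source
      have hsrc : IsSource A p := (source_iff hn σ p).mpr ⟨hσp, hp⟩
      exact ⟨s, p, hs, hsrc, fun u hu => hsk u s hu hs,
        fun u hu => source_uniq hn σ hsk hu hsrc, harcps⟩
    · -- neither neighbor is a source: contradiction with antimagicness
      exfalso
      rw [Bool.not_eq_true] at hq
      rw [Bool.not_eq_false] at hp
      have huniqp : ∀ w, A p w → w = s := by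
        intro w hw
        rcases (arc_iff hn σ p w).mp hw with ⟨-, hw1⟩ | ⟨hwf, hw2⟩
        · rw [hw1, hpdef, sub_add_cancel]
        · exfalso
          have : w = p - 1 := by rw [hw2]; ring
          rw [this, hp] at hwf
          simp at hwf
      have huniqq : ∀ w, A q w → w = s := by
        intro w hw
        rcases (arc_iff hn σ q w).mp hw with ⟨hqt, -⟩ | ⟨-, hw2⟩
        · rw [hq] at hqt; simp at hqt
        · have : w = q - 1 := by rw [hw2]; ring
          rw [this, hq1]
      have hNp := nbhd_uniq_pred A D hDge h1D hps hs harcps huniqp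
      have hNq := nbhd_uniq_pred A D hDge h1D hqs hs harcqs huniqq
      apply hpq
      apply hf
      show dWeight A D lab p = dWeight A D lab q
      rw [dWeight_eq_label A D lab hNp, dWeight_eq_label A D lab hNq]
end

section
/- For every n ≥ 3, the unidirectional oriented cycle C⃗_n is {0,1}-antimagic. -/
open scoped Classical

/-!
With `D = {0, 1}` the `D`-neighbourhood of a vertex `v` of `C⃗_n` is `{v, v + 1}`, so its weight
is `f v + f (v + 1)`. For odd `n` the labels `1, …, n` in cyclic order give the odd weights
`3, 5, …, 2n - 1` and the single even weight `n + 1`. For even `n` this collides, so swap the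
first two labels: the weights become `3, 4`, then `7, 9, …, 2n - 1`, and finally the even
weight `n + 2 ≥ 6`.
-/

theorem inDNbhd_zero_one_iff {V : Type*} (A : V → V → Prop) (v y : V) :
    InDNbhd A {0, 1} v y ↔ y = v ∨ A v y := by
  constructor
  · rintro ⟨k, rfl | rfl, hwalk, -⟩
    · exact Or.inl hwalk.symm
    · obtain ⟨w, hvw, rfl⟩ := hwalk
      exact Or.inr hvw
  · intro h
    by_cases hyv : y = v
    · exact ⟨0, Or.inl rfl, hyv.symm, fun m hm => absurd hm m.not_lt_zero⟩
    refine ⟨1, Or.inr rfl, ⟨y, h.resolve_left hyv, rfl⟩, fun m hm hwalk => hyv ?_⟩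
    obtain rfl : m = 0 := Nat.lt_one_iff.mp hm
    exact hwalk.symm

theorem dWeight_zero_one_of_arc_iff {V : Type*} [Fintype V] {A : V → V → Prop} {v w : V}
    (hA : ∀ y, A v y ↔ y = w) (hwv : w ≠ v) (f : V → ℕ) :
    dWeight A {0, 1} f v = f v + f w := by
  simp only [dWeight, inDNbhd_zero_one_iff, hA]
  rw [← Finset.sum_filter]
  have : Finset.univ.filter (fun y => y = v ∨ y = w) = {v, w} := by ext; simp
  rw [this, Finset.sum_pair hwv.symm]

theorem Nat.add_one_mod_eq_ite {a n : ℕ} (ha : a < n) :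
    (a + 1) % n = if a + 1 = n then 0 else a + 1 := by
  split_ifs with h
  · rw [h, Nat.mod_self]
  · exact Nat.mod_eq_of_lt (by omega)

theorem Fin.val_add_one_eq_mod {n : ℕ} [NeZero n] (u : Fin n) :
    ((u + 1 : Fin n) : ℕ) = (u + 1) % n := by
  rw [Fin.val_add, Fin.val_one', Nat.add_mod_mod]

theorem Fin.add_one_ne_self {n : ℕ} [NeZero n] (hn : 2 ≤ n) (u : Fin n) : u + 1 ≠ u := by
  intro h
  have := congrArg Fin.val h
  rw [Fin.val_add_one_eq_mod, Nat.add_one_mod_eq_ite u.isLt] at this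
  split_ifs at this <;> omega

theorem Fin.val_swap_zero_one {n : ℕ} [NeZero n] (hn : 2 ≤ n) (x : Fin n) :
    (Equiv.swap (0 : Fin n) 1 x : ℕ) = Equiv.swap 0 1 (x : ℕ) := by
  rw [Fin.val_injective.map_swap, Fin.val_zero, Fin.val_one', Nat.mod_eq_of_lt hn]

theorem uniArc_iff {n : ℕ} [NeZero n] (u v : Fin n) : uniArc n u v ↔ v = u + 1 := by
  rw [uniArc, Fin.ext_iff, Fin.val_add_one_eq_mod]

theorem dWeight_uniArc_zero_one {n : ℕ} [NeZero n] (hn : 2 ≤ n) (f : Fin n → ℕ) (v : Fin n) :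
    dWeight (uniArc n) {0, 1} f v = f v + f (v + 1) :=
  dWeight_zero_one_of_arc_iff (uniArc_iff v) (Fin.add_one_ne_self hn v) f

theorem dAntimagic_uniArc_zero_one_of_injOn {n : ℕ} [NeZero n] (hn : 2 ≤ n)
    (σ : Equiv.Perm (Fin n)) (g : ℕ → ℕ) (hσ : ∀ x, (σ x : ℕ) = g x)
    (hg : Set.InjOn (fun a => g a + g ((a + 1) % n)) (Set.Iio n)) :
    DAntimagic (Fin n) (uniArc n) {0, 1} := by
  refine ⟨σ.trans (finCongr (Fintype.card_fin n).symm), fun u v huv => Fin.ext ?_⟩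
  simp only [dWeight_uniArc_zero_one hn, Equiv.trans_apply, finCongr_apply, Fin.val_cast,
    hσ, Fin.val_add_one_eq_mod] at huv
  exact hg u.isLt v.isLt (by simp only; omega)

theorem injOn_add_add_one_mod_of_odd {n : ℕ} (hn : Odd n) :
    Set.InjOn (fun a => a + (a + 1) % n) (Set.Iio n) := by
  intro a (ha : a < n) b (hb : b < n) h
  obtain ⟨k, rfl⟩ := hn
  simp only [Nat.add_one_mod_eq_ite ha, Nat.add_one_mod_eq_ite hb] at h
  split_ifs at h <;> omega

theorem injOn_swap_add_add_one_mod_of_even {n : ℕ} (hn : Even n) (h3 : 3 ≤ n) :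
    Set.InjOn (fun a => Equiv.swap 0 1 a + Equiv.swap 0 1 ((a + 1) % n)) (Set.Iio n) := by
  intro a (ha : a < n) b (hb : b < n) h
  obtain ⟨k, rfl⟩ := hn
  simp only [Nat.add_one_mod_eq_ite ha, Nat.add_one_mod_eq_ite hb, Equiv.swap_apply_def] at h
  split_ifs at h <;> omega

/-- For every `n ≥ 3`, the unidirectional `C⃗_n` is `{0,1}`-antimagic. -/
theorem uni_antimagic_zero_one (n : ℕ) (hn : 3 ≤ n) :
    DAntimagic (Fin n) (uniArc n) {0, 1} := by
  have : NeZero n := ⟨by omega⟩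
  have hn2 : 2 ≤ n := by omega
  rcases Nat.even_or_odd n with heven | hodd
  · exact dAntimagic_uniArc_zero_one_of_injOn hn2 (Equiv.swap 0 1) (Equiv.swap 0 1)
      (Fin.val_swap_zero_one hn2) (injOn_swap_add_add_one_mod_of_even heven hn)
  · exact dAntimagic_uniArc_zero_one_of_injOn hn2 (Equiv.refl _) id (fun _ => rfl)
      (injOn_add_add_one_mod_of_odd hodd)
end
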